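/- arXiv:2303.01472 — 5 statements merged into one kernel-verified Lean document; each statement's English description precedes it below -/
import Mathlib

section
/- Let H be a real Hilbert space, let a : H × H → ℝ be a bounded bilinear form with boundedness constant ‖a‖ (i.e. |a(x,y)| ≤ ‖a‖·‖x‖·‖y‖ for all x,y ∈ H) which is H-elliptic with constant α > 0 (i.e. a(v,v) ≥ α‖v‖² for all v ∈ H), and let F : H → ℝ be a bounded linear functional. Let H_h be a subspace of H and let a_h : H × H → ℝ be a bounded bilinear form with boundedness constant ‖a_h‖ such that a_h(v_h, v_h) ≥ α̃‖v_h‖² for all v_h ∈ H_h, where α̃ > 0. Let u ∈ H satisfy a(u,v) = F(v) for all v ∈ H and let u_h ∈ H_h satisfy a_h(u_h, v_h) = F(v_h) for all v_h ∈ H_h. If D ≥ 0 is any constant such that |a(u, v_h) − a_h(u, v_h)| ≤ D‖v_h‖ for all v_h ∈ H_h, then for every w_h ∈ H_h there holds ‖u − u_h‖ ≤ (1 + 2‖a‖/α̃ + ‖a_h‖/α̃)·‖u − w_h‖ + (1/α̃)·D. -/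
/-!
Put `e := u_h - w_h ∈ H_h`. Since `a_h(u_h, e) = F(e) = a(u, e)`, ellipticity of `a_h` on `H_h` gives
`α̃ ‖e‖² ≤ a_h(e, e) = (a(u, e) - a_h(u, e)) + a_h(u - w_h, e) ≤ (D + ‖a_h‖ ‖u - w_h‖) ‖e‖`,
so `‖e‖ ≤ (D + ‖a_h‖ ‖u - w_h‖) / α̃`, and the triangle inequality `‖u - u_h‖ ≤ ‖u - w_h‖ + ‖e‖`
concludes. The term `2 ‖a‖ / α̃` is only slack: a bound `|a(v, v)| ≤ ‖a‖ ‖v‖²` forces `‖a‖ ≥ 0`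
as soon as `v ≠ 0`.
-/

lemma mul_le_of_mul_sq_le_mul {c K t : ℝ} (ht : 0 ≤ t) (hK : 0 ≤ K) (h : c * t ^ 2 ≤ K * t) :
    c * t ≤ K := by
  rcases ht.eq_or_lt with rfl | ht
  · simpa using hK
  · exact le_of_mul_le_mul_right (by linarith) ht

section BilinearForm

variable {E : Type*} [SeminormedAddCommGroup E] [NormedSpace ℝ E]

lemma mul_norm_nonneg_of_abs_apply_le {B : E →ₗ[ℝ] E →ₗ[ℝ] ℝ} {C : ℝ}
    (hB : ∀ x y : E, |B x y| ≤ C * ‖x‖ * ‖y‖) (v : E) : 0 ≤ C * ‖v‖ := by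
  rcases (norm_nonneg v).eq_or_lt with hv | hv
  · simp [← hv]
  · exact le_of_mul_le_mul_right (by linarith [abs_nonneg (B v v), hB v v]) hv

theorem mul_norm_sub_le_of_consistency {a ah : E →ₗ[ℝ] E →ₗ[ℝ] ℝ} {Cah αt D : ℝ}
    {Hh : Submodule ℝ E} (hah_bdd : ∀ x y : E, |ah x y| ≤ Cah * ‖x‖ * ‖y‖)
    (hah_ell : ∀ v ∈ Hh, αt * ‖v‖ ^ 2 ≤ ah v v) {u uh wh : E}
    (huh_mem : uh ∈ Hh) (hwh : wh ∈ Hh) (hGalerkin : ∀ v ∈ Hh, ah uh v = a u v) (hD : 0 ≤ D)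
    (hconsist : ∀ v ∈ Hh, |a u v - ah u v| ≤ D * ‖v‖) :
    αt * ‖uh - wh‖ ≤ D + Cah * ‖u - wh‖ := by
  set e := uh - wh
  have he : e ∈ Hh := Hh.sub_mem huh_mem hwh
  have herror : ah e e = (a u e - ah u e) + ah (u - wh) e := by
    have hGe := hGalerkin e he
    simp only [e, map_sub, LinearMap.sub_apply] at hGe ⊢
    linarith
  have hbound : ah e e ≤ (D + Cah * ‖u - wh‖) * ‖e‖ := by
    rw [herror]
    linarith [le_of_abs_le (hconsist e he), le_of_abs_le (hah_bdd (u - wh) e)]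
  exact mul_le_of_mul_sq_le_mul (norm_nonneg e)
    (add_nonneg hD (mul_norm_nonneg_of_abs_apply_le hah_bdd _)) ((hah_ell e he).trans hbound)

end BilinearForm

theorem strang_lemma_general
    {H : Type*} [NormedAddCommGroup H] [InnerProductSpace ℝ H]
    (a ah : H →ₗ[ℝ] H →ₗ[ℝ] ℝ) (Ca Cah αt : ℝ) (hαt : 0 < αt)
    (ha_bdd : ∀ x y : H, |a x y| ≤ Ca * ‖x‖ * ‖y‖)
    (Hh : Submodule ℝ H)
    (hah_bdd : ∀ x y : H, |ah x y| ≤ Cah * ‖x‖ * ‖y‖)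
    (hah_ell : ∀ v ∈ Hh, αt * ‖v‖ ^ 2 ≤ ah v v)
    (F : H →L[ℝ] ℝ)
    (u : H) (hu : ∀ v : H, a u v = F v)
    (uh : H) (huh_mem : uh ∈ Hh) (huh : ∀ v ∈ Hh, ah uh v = F v)
    (D : ℝ) (hD : 0 ≤ D)
    (hconsist : ∀ v ∈ Hh, |a u v - ah u v| ≤ D * ‖v‖)
    (wh : H) (hwh : wh ∈ Hh) :
    ‖u - uh‖ ≤ (1 + 2 * Ca / αt + Cah / αt) * ‖u - wh‖ + (1 / αt) * D := by
  have hdiscrete : αt * ‖uh - wh‖ ≤ D + Cah * ‖u - wh‖ :=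
    mul_norm_sub_le_of_consistency hah_bdd hah_ell huh_mem hwh
      (fun v hv => (huh v hv).trans (hu v).symm) hD hconsist
  have hCa : 0 ≤ Ca * ‖u - wh‖ := mul_norm_nonneg_of_abs_apply_le ha_bdd _
  have htriangle : ‖u - uh‖ ≤ ‖u - wh‖ + ‖uh - wh‖ := by
    simpa only [norm_sub_rev uh wh] using norm_sub_le_norm_sub_add_norm_sub u wh uh
  calc ‖u - uh‖ ≤ ‖u - wh‖ + ‖uh - wh‖ := htriangle
    _ ≤ ‖u - wh‖ + (2 * (Ca * ‖u - wh‖) + (D + Cah * ‖u - wh‖)) / αt := by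
      gcongr
      rw [le_div_iff₀ hαt]
      linarith
    _ = (1 + 2 * Ca / αt + Cah / αt) * ‖u - wh‖ + (1 / αt) * D := by
      field_simp
      ring

/-- Strang-type lemma (Lemma 5.1 of the paper): abstract error estimate for a
nonconforming Galerkin approximation in a real Hilbert space. -/
theorem strang_lemma
    {H : Type*} [NormedAddCommGroup H] [InnerProductSpace ℝ H] [CompleteSpace H]
    (a ah : H →ₗ[ℝ] H →ₗ[ℝ] ℝ) (Ca Cah α αt : ℝ) (hα : 0 < α) (hαt : 0 < αt)
    (ha_bdd : ∀ x y : H, |a x y| ≤ Ca * ‖x‖ * ‖y‖)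
    (ha_ell : ∀ v : H, α * ‖v‖ ^ 2 ≤ a v v)
    (Hh : Submodule ℝ H)
    (hah_bdd : ∀ x y : H, |ah x y| ≤ Cah * ‖x‖ * ‖y‖)
    (hah_ell : ∀ v ∈ Hh, αt * ‖v‖ ^ 2 ≤ ah v v)
    (F : H →L[ℝ] ℝ)
    (u : H) (hu : ∀ v : H, a u v = F v)
    (uh : H) (huh_mem : uh ∈ Hh) (huh : ∀ v ∈ Hh, ah uh v = F v)
    (D : ℝ) (hD : 0 ≤ D)
    (hconsist : ∀ v ∈ Hh, |a u v - ah u v| ≤ D * ‖v‖)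
    (wh : H) (hwh : wh ∈ Hh) :
    ‖u - uh‖ ≤ (1 + 2 * Ca / αt + Cah / αt) * ‖u - wh‖ + (1 / αt) * D :=
  strang_lemma_general a ah Ca Cah αt hαt ha_bdd Hh hah_bdd hah_ell F u hu uh huh_mem huh D hD
    hconsist wh hwh
end

section
/- For every real number p > 2 and every dimension d ≥ 1 there exists a constant c_p > 0, depending only on p and independent of z and y, such that for all z, y ∈ ℝ^d: ‖ ‖z‖^{p−2}·z − ‖y‖^{p−2}·y ‖ ≤ c_p·(‖z‖ + ‖y‖)^{p−2}·‖z − y‖. -/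
/-!
With `q = p - 2` and `‖y‖ ≤ ‖z‖`, split
`‖z‖^q • z - ‖y‖^q • y = ‖z‖^q • (z - y) + (‖z‖^q - ‖y‖^q) • y`.
The first term is at most `(‖z‖ + ‖y‖)^q ‖z - y‖`. For the second, the mean value theorem
bounds `‖z‖^q - ‖y‖^q` by `q (‖z‖^(q-1) + ‖y‖^(q-1)) (‖z‖ - ‖y‖)`, and the extra factor `‖y‖`
turns both powers `q - 1` into powers `q`, whatever the sign of `q - 1`. This gives
`c = 1 + 2 (p - 2)`, in any real normed space.
-/

open Set

namespace Real

theorem rpow_le_add_rpow_of_mem_Icc {q a b x : ℝ} (hb : 0 < b) (hx : x ∈ Icc b a) :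
    x ^ q ≤ a ^ q + b ^ q := by
  have hx0 : 0 < x := hb.trans_le hx.1
  rcases le_total 0 q with hq | hq
  · linarith [rpow_le_rpow hx0.le hx.2 hq, rpow_nonneg hb.le q]
  · linarith [rpow_le_rpow_of_nonpos hb hx.1 hq, rpow_nonneg (hx0.trans_le hx.2).le q]

theorem rpow_sub_rpow_le_mul_sub {q a b : ℝ} (hq : 0 ≤ q) (hb : 0 < b) (hba : b ≤ a) :
    a ^ q - b ^ q ≤ q * (a ^ (q - 1) + b ^ (q - 1)) * (a - b) := by
  have hpos : ∀ x ∈ Icc b a, x ≠ 0 := fun x hx => (hb.trans_le hx.1).ne'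
  refine (convex_Icc b a).image_sub_le_mul_sub_of_deriv_le (f := fun x => x ^ q)
    (continuousOn_id.rpow_const fun x hx => Or.inl (hpos x hx)) ?_ ?_ b
    (left_mem_Icc.2 hba) a (right_mem_Icc.2 hba) hba
  · exact fun x hx => (differentiableAt_rpow_const_of_ne q
      (hpos x (interior_subset hx))).differentiableWithinAt
  · intro x hx
    rw [deriv_rpow_const]
    exact mul_le_mul_of_nonneg_left (rpow_le_add_rpow_of_mem_Icc hb (interior_subset hx)) hq

theorem mul_rpow_sub_rpow_le {q a b : ℝ} (hq : 0 ≤ q) (hb : 0 ≤ b) (hba : b ≤ a) :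
    b * (a ^ q - b ^ q) ≤ q * (a ^ q + b ^ q) * (a - b) := by
  have hab : 0 ≤ a - b := sub_nonneg.2 hba
  rcases hb.eq_or_lt with rfl | hb
  · rw [zero_mul]
    have := rpow_nonneg hba q
    positivity
  have ha : 0 < a := hb.trans_le hba
  have hba' : b * a ^ (q - 1) ≤ a ^ q := by
    calc b * a ^ (q - 1) ≤ a * a ^ (q - 1) :=
          mul_le_mul_of_nonneg_right hba (rpow_nonneg ha.le _)
      _ = a ^ q := by rw [rpow_sub_one ha.ne', mul_div_cancel₀ _ ha.ne']
  have hbb : b * b ^ (q - 1) = b ^ q := by rw [rpow_sub_one hb.ne', mul_div_cancel₀ _ hb.ne']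
  calc b * (a ^ q - b ^ q) ≤ b * (q * (a ^ (q - 1) + b ^ (q - 1)) * (a - b)) :=
        mul_le_mul_of_nonneg_left (rpow_sub_rpow_le_mul_sub hq hb hba) hb.le
    _ = q * (b * a ^ (q - 1) + b * b ^ (q - 1)) * (a - b) := by ring
    _ ≤ q * (a ^ q + b ^ q) * (a - b) := by
        rw [hbb]
        gcongr

end Real

section

variable {E : Type*} [NormedAddCommGroup E] [NormedSpace ℝ E]

theorem norm_rpow_smul_sub_rpow_smul_le_of_norm_le {q : ℝ} (hq : 0 ≤ q) {z y : E}
    (h : ‖y‖ ≤ ‖z‖) :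
    ‖‖z‖ ^ q • z - ‖y‖ ^ q • y‖ ≤ (1 + 2 * q) * (‖z‖ + ‖y‖) ^ q * ‖z - y‖ := by
  set a := ‖z‖
  set b := ‖y‖
  have hb : 0 ≤ b := norm_nonneg y
  have hab : a - b ≤ ‖z - y‖ := norm_sub_norm_le z y
  have hpow : b ^ q ≤ a ^ q := Real.rpow_le_rpow hb h hq
  have ha_le : a ^ q ≤ (a + b) ^ q := Real.rpow_le_rpow (hb.trans h) (by linarith) hq
  have hb_le : b ^ q ≤ (a + b) ^ q := hpow.trans ha_le
  have hsplit : ‖a ^ q • z - b ^ q • y‖ ≤ a ^ q * ‖z - y‖ + b * (a ^ q - b ^ q) := by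
    calc ‖a ^ q • z - b ^ q • y‖ = ‖a ^ q • (z - y) + (a ^ q - b ^ q) • y‖ := by
          rw [smul_sub, sub_smul, sub_add_sub_cancel]
      _ ≤ a ^ q * ‖z - y‖ + b * (a ^ q - b ^ q) := by
          refine (norm_add_le _ _).trans_eq ?_
          rw [norm_smul, norm_smul, Real.norm_of_nonneg (Real.rpow_nonneg (hb.trans h) q),
            Real.norm_of_nonneg (sub_nonneg.2 hpow), mul_comm _ b]
  calc ‖a ^ q • z - b ^ q • y‖ ≤ a ^ q * ‖z - y‖ + q * (a ^ q + b ^ q) * (a - b) :=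
        hsplit.trans (add_le_add le_rfl (Real.mul_rpow_sub_rpow_le hq hb h))
    _ ≤ (a + b) ^ q * ‖z - y‖ + q * ((a + b) ^ q + (a + b) ^ q) * ‖z - y‖ := by
        gcongr
    _ = (1 + 2 * q) * (a + b) ^ q * ‖z - y‖ := by ring

theorem norm_rpow_smul_sub_rpow_smul_le {q : ℝ} (hq : 0 ≤ q) (z y : E) :
    ‖‖z‖ ^ q • z - ‖y‖ ^ q • y‖ ≤ (1 + 2 * q) * (‖z‖ + ‖y‖) ^ q * ‖z - y‖ := by
  rcases le_total ‖y‖ ‖z‖ with h | h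
  · exact norm_rpow_smul_sub_rpow_smul_le_of_norm_le hq h
  · simpa only [norm_sub_rev, add_comm ‖y‖] using norm_rpow_smul_sub_rpow_smul_le_of_norm_le hq h

end

/-- For every real `p > 2` there is a constant `c_p > 0`, depending only on `p`
(and independent of `z` and `y`), such that for every dimension `d ≥ 1` and all
`z, y ∈ ℝ^d`: `‖ ‖z‖^(p-2) • z − ‖y‖^(p-2) • y ‖ ≤ c_p (‖z‖+‖y‖)^(p-2) ‖z−y‖`. -/
theorem power_vector_ineq (p : ℝ) (hp : 2 < p) :
    ∃ c : ℝ, 0 < c ∧ ∀ (d : ℕ), 1 ≤ d → ∀ z y : EuclideanSpace ℝ (Fin d),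
      ‖(‖z‖ ^ (p - 2)) • z - (‖y‖ ^ (p - 2)) • y‖ ≤
        c * (‖z‖ + ‖y‖) ^ (p - 2) * ‖z - y‖ :=
  ⟨1 + 2 * (p - 2), by linarith, fun _ _ z y => norm_rpow_smul_sub_rpow_smul_le (by linarith) z y⟩
end

section
/- Let d ≥ 1, let p ∈ [3,4] and set q := 2(p−1). There exists a constant C > 0 depending only on p such that for every measure μ on a measurable space Ω, all w, w̃, z : Ω → ℝ^d belonging to L^q(μ), and all g : Ω → ℝ^d belonging to L²(μ), the function x ↦ (‖w(x)‖^{p−2} − ‖w̃(x)‖^{p−2})·(z(x)·g(x)) is μ-integrable and | ∫_Ω (‖w‖^{p−2} − ‖w̃‖^{p−2})·(z·g) dμ | ≤ C·(‖w‖_{L^q(μ)} + ‖w̃‖_{L^q(μ)})^{p−3} · ‖w − w̃‖_{L^q(μ)} · ‖z‖_{L^q(μ)} · ‖g‖_{L²(μ)}. -/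
/-!
Pointwise, the mean value theorem for `t ↦ t ^ (p - 2)` and Cauchy–Schwarz bound the integrand
by `(p - 2) (‖w‖ + ‖w̃‖) ^ (p - 3) ‖w - w̃‖ ‖z‖ ‖g‖`. Hölder's inequality with the four exponents
`(p - 3)/q + 1/q + 1/q + 1/2 = 1` and Minkowski's inequality for `‖w‖ + ‖w̃‖` then give the
estimate with `C = p - 2`, and finiteness of the bound gives integrability.
-/

open MeasureTheory
open scoped ENNReal RealInnerProductSpace

theorem abs_rpow_sub_rpow_le {s a b : ℝ} (hs : 1 ≤ s) (ha : 0 ≤ a) (hb : 0 ≤ b) :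
    |a ^ s - b ^ s| ≤ s * (a + b) ^ (s - 1) * |a - b| := by
  wlog hba : b ≤ a generalizing a b
  · simpa only [abs_sub_comm, add_comm] using this hb ha (le_of_not_ge hba)
  have hs0 : 0 ≤ s := by linarith
  have hs1 : 0 ≤ s - 1 := by linarith
  have hmvt : ‖a ^ s - b ^ s‖ ≤ s * a ^ (s - 1) * ‖a - b‖ := by
    refine (convex_Icc 0 a).norm_image_sub_le_of_norm_hasDerivWithin_le
      (fun t _ => (Real.hasDerivAt_rpow_const (Or.inr hs)).hasDerivWithinAt)
      (fun t ht => ?_) ⟨hb, hba⟩ ⟨ha, le_rfl⟩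
    rw [Real.norm_eq_abs, abs_of_nonneg (by have := ht.1; positivity)]
    exact mul_le_mul_of_nonneg_left (Real.rpow_le_rpow ht.1 ht.2 hs1) hs0
  calc |a ^ s - b ^ s| ≤ s * a ^ (s - 1) * |a - b| := hmvt
    _ ≤ s * (a + b) ^ (s - 1) * |a - b| := by gcongr; linarith

theorem abs_norm_rpow_sub_norm_rpow_le {E : Type*} [SeminormedAddCommGroup E] {s : ℝ}
    (hs : 1 ≤ s) (u v : E) : |‖u‖ ^ s - ‖v‖ ^ s| ≤ s * (‖u‖ + ‖v‖) ^ (s - 1) * ‖u - v‖ :=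
  (abs_rpow_sub_rpow_le hs (norm_nonneg u) (norm_nonneg v)).trans <| by
    gcongr
    exact abs_norm_sub_norm_le u v

theorem enorm_norm_rpow_sub_mul_inner_le {E : Type*} [NormedAddCommGroup E]
    [InnerProductSpace ℝ E] {s : ℝ} (hs : 1 ≤ s) (u v y h : E) :
    ‖(‖u‖ ^ s - ‖v‖ ^ s) * ⟪y, h⟫‖ₑ ≤
      ENNReal.ofReal s * (‖‖u‖ + ‖v‖‖ₑ ^ (s - 1) * ‖u - v‖ₑ * ‖y‖ₑ * ‖h‖ₑ) := by
  have hreal : |(‖u‖ ^ s - ‖v‖ ^ s) * ⟪y, h⟫| ≤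
      s * ((‖u‖ + ‖v‖) ^ (s - 1) * ‖u - v‖ * ‖y‖ * ‖h‖) := by
    rw [abs_mul]
    calc _ ≤ s * (‖u‖ + ‖v‖) ^ (s - 1) * ‖u - v‖ * (‖y‖ * ‖h‖) := by
          gcongr
          · exact abs_norm_rpow_sub_norm_rpow_le hs u v
          · exact abs_real_inner_le_norm y h
      _ = _ := by ring
  rw [← ofReal_norm, Real.norm_eq_abs, ← ofReal_norm, ← ofReal_norm, ← ofReal_norm,
    ← ofReal_norm, ENNReal.ofReal_rpow_of_nonneg (norm_nonneg _) (by linarith),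
    ← ENNReal.ofReal_mul (by positivity), ← ENNReal.ofReal_mul (by positivity),
    ← ENNReal.ofReal_mul (by positivity), ← ENNReal.ofReal_mul (by positivity),
    Real.norm_of_nonneg (by positivity)]
  exact ENNReal.ofReal_le_ofReal hreal

section LintegralBounds

variable {Ω : Type*} [MeasurableSpace Ω] {μ : Measure Ω}

theorem lintegral_rpow_mul_rpow_mul_rpow_mul_rpow_le {f₁ f₂ f₃ f₄ : Ω → ℝ≥0∞}
    (hf₁ : AEMeasurable f₁ μ) (hf₂ : AEMeasurable f₂ μ) (hf₃ : AEMeasurable f₃ μ)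
    (hf₄ : AEMeasurable f₄ μ) {e₁ e₂ e₃ e₄ : ℝ} (he₁ : 0 ≤ e₁) (he₂ : 0 ≤ e₂) (he₃ : 0 ≤ e₃)
    (he₄ : 0 ≤ e₄) (hsum : e₁ + e₂ + e₃ + e₄ = 1) :
    ∫⁻ x, f₁ x ^ e₁ * f₂ x ^ e₂ * f₃ x ^ e₃ * f₄ x ^ e₄ ∂μ ≤
      (∫⁻ x, f₁ x ∂μ) ^ e₁ * (∫⁻ x, f₂ x ∂μ) ^ e₂ * (∫⁻ x, f₃ x ∂μ) ^ e₃ *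
        (∫⁻ x, f₄ x ∂μ) ^ e₄ := by
  simpa [Fin.prod_univ_four, mul_assoc] using
    ENNReal.lintegral_prod_norm_pow_le (μ := μ) Finset.univ (f := ![f₁, f₂, f₃, f₄])
      (p := ![e₁, e₂, e₃, e₄]) (by intro i _; fin_cases i <;> simpa)
      (by simpa [Fin.sum_univ_four] using hsum) (by intro i _; fin_cases i <;> simpa)

theorem eLpNorm_ofReal_eq_lintegral {E : Type*} [NormedAddCommGroup E] (f : Ω → E) {q : ℝ}
    (hq : 0 < q) : eLpNorm f (.ofReal q) μ = (∫⁻ x, ‖f x‖ₑ ^ q ∂μ) ^ (1 / q) := by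
  rw [eLpNorm_eq_lintegral_rpow_enorm_toReal (by simpa using hq) ENNReal.ofReal_ne_top,
    ENNReal.toReal_ofReal hq.le]

/-- With the power `r` outside the norm, `r = 0` (the case `p = 3`) needs no special case. -/
theorem lintegral_enorm_rpow_mul_le {E₁ E₂ E₃ E₄ : Type*} [NormedAddCommGroup E₁]
    [NormedAddCommGroup E₂] [NormedAddCommGroup E₃] [NormedAddCommGroup E₄]
    {a : Ω → E₁} {b : Ω → E₂} {c : Ω → E₃} {k : Ω → E₄}
    (ha : AEStronglyMeasurable a μ) (hb : AEStronglyMeasurable b μ)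
    (hc : AEStronglyMeasurable c μ) (hk : AEStronglyMeasurable k μ)
    {r q₁ q₂ q₃ q₄ : ℝ} (hr : 0 ≤ r) (hq₁ : 0 < q₁) (hq₂ : 0 < q₂) (hq₃ : 0 < q₃) (hq₄ : 0 < q₄)
    (hsum : r / q₁ + 1 / q₂ + 1 / q₃ + 1 / q₄ = 1) :
    ∫⁻ x, ‖a x‖ₑ ^ r * ‖b x‖ₑ * ‖c x‖ₑ * ‖k x‖ₑ ∂μ ≤
      eLpNorm a (.ofReal q₁) μ ^ r * eLpNorm b (.ofReal q₂) μ * eLpNorm c (.ofReal q₃) μ *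
        eLpNorm k (.ofReal q₄) μ := by
  have hpow {t q : ℝ} (hq : 0 < q) (y : ℝ≥0∞) : (y ^ q) ^ (t / q) = y ^ t := by
    rw [← ENNReal.rpow_mul, mul_div_cancel₀ _ hq.ne']
  calc ∫⁻ x, ‖a x‖ₑ ^ r * ‖b x‖ₑ * ‖c x‖ₑ * ‖k x‖ₑ ∂μ
      = ∫⁻ x, (‖a x‖ₑ ^ q₁) ^ (r / q₁) * (‖b x‖ₑ ^ q₂) ^ (1 / q₂) *
          (‖c x‖ₑ ^ q₃) ^ (1 / q₃) * (‖k x‖ₑ ^ q₄) ^ (1 / q₄) ∂μ := by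
        simp only [hpow hq₁, hpow hq₂, hpow hq₃, hpow hq₄, ENNReal.rpow_one]
    _ ≤ _ := lintegral_rpow_mul_rpow_mul_rpow_mul_rpow_le (by fun_prop) (by fun_prop)
          (by fun_prop) (by fun_prop) (by positivity) (by positivity) (by positivity)
          (by positivity) hsum
    _ = _ := by
        rw [eLpNorm_ofReal_eq_lintegral _ hq₁, eLpNorm_ofReal_eq_lintegral _ hq₂,
          eLpNorm_ofReal_eq_lintegral _ hq₃, eLpNorm_ofReal_eq_lintegral _ hq₄,
          ← ENNReal.rpow_mul, one_div_mul_eq_div]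

theorem eLpNorm_norm_add_norm_le {E F : Type*} [NormedAddCommGroup E] [NormedAddCommGroup F]
    {f : Ω → E} {g : Ω → F} (hf : AEStronglyMeasurable f μ) (hg : AEStronglyMeasurable g μ)
    {q : ℝ≥0∞} (hq : 1 ≤ q) :
    eLpNorm (fun x => ‖f x‖ + ‖g x‖) q μ ≤ eLpNorm f q μ + eLpNorm g q μ := by
  have h := eLpNorm_add_le hf.norm hg.norm hq
  rwa [eLpNorm_norm, eLpNorm_norm] at h

theorem integrable_and_norm_integral_le {E : Type*} [NormedAddCommGroup E] [NormedSpace ℝ E]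
    {f : Ω → E} (hf : AEStronglyMeasurable f μ) {R : ℝ≥0∞} (hfR : ∫⁻ x, ‖f x‖ₑ ∂μ ≤ R)
    (hR : R ≠ ∞) : Integrable f μ ∧ ‖∫ x, f x ∂μ‖ ≤ R.toReal :=
  ⟨⟨hf, hfR.trans_lt hR.lt_top⟩, by
    rw [← toReal_enorm]
    exact ENNReal.toReal_mono hR ((enorm_integral_le_lintegral_enorm f).trans hfR)⟩

theorem lintegral_enorm_norm_rpow_sub_mul_inner_le {E : Type*} [NormedAddCommGroup E]
    [InnerProductSpace ℝ E] {p : ℝ} (hp : 3 ≤ p) {w w' z g : Ω → E}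
    (hw : AEStronglyMeasurable w μ) (hw' : AEStronglyMeasurable w' μ)
    (hz : AEStronglyMeasurable z μ) (hg : AEStronglyMeasurable g μ) :
    ∫⁻ x, ‖(‖w x‖ ^ (p - 2) - ‖w' x‖ ^ (p - 2)) * ⟪z x, g x⟫‖ₑ ∂μ ≤
      ENNReal.ofReal (p - 2) *
        ((eLpNorm w (.ofReal (2 * (p - 1))) μ + eLpNorm w' (.ofReal (2 * (p - 1))) μ) ^ (p - 3) *
          eLpNorm (fun x => w x - w' x) (.ofReal (2 * (p - 1))) μ *
          eLpNorm z (.ofReal (2 * (p - 1))) μ * eLpNorm g 2 μ) := by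
  have hq : (1 : ℝ≥0∞) ≤ .ofReal (2 * (p - 1)) := by
    rw [← ENNReal.ofReal_one]; exact ENNReal.ofReal_le_ofReal (by linarith)
  calc _ ≤ ∫⁻ x, ENNReal.ofReal (p - 2) * (‖‖w x‖ + ‖w' x‖‖ₑ ^ (p - 3) * ‖w x - w' x‖ₑ *
          ‖z x‖ₑ * ‖g x‖ₑ) ∂μ := by
        refine lintegral_mono fun x => ?_
        have h := enorm_norm_rpow_sub_mul_inner_le (s := p - 2) (by linarith)
          (w x) (w' x) (z x) (g x)
        rwa [show p - 2 - 1 = p - 3 by ring] at h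
    _ = ENNReal.ofReal (p - 2) * ∫⁻ x, ‖‖w x‖ + ‖w' x‖‖ₑ ^ (p - 3) * ‖w x - w' x‖ₑ *
          ‖z x‖ₑ * ‖g x‖ₑ ∂μ := lintegral_const_mul' _ _ ENNReal.ofReal_ne_top
    _ ≤ _ := by
        gcongr
        have hsum :
            (p - 3) / (2 * (p - 1)) + 1 / (2 * (p - 1)) + 1 / (2 * (p - 1)) + 1 / 2 = 1 := by
          field_simp [show p - 1 ≠ 0 by linarith]; ring
        refine (lintegral_enorm_rpow_mul_le (by fun_prop) (by fun_prop) hz hg (by linarith)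
          (by linarith) (by linarith) (by linarith) two_pos hsum).trans ?_
        rw [ENNReal.ofReal_ofNat]
        gcongr
        exact eLpNorm_norm_add_norm_le hw hw' hq

end LintegralBounds

universe u

theorem forchheimer_difference_holder_general {d : ℕ}
    (p : ℝ) (hp1 : 3 ≤ p) :
    ∃ C : ℝ, 0 < C ∧
      ∀ (Ω : Type u) [MeasurableSpace Ω], ∀ (μ : Measure Ω)
        (w w' z g : Ω → EuclideanSpace ℝ (Fin d)),
        MemLp w (ENNReal.ofReal (2 * (p - 1))) μ →
        MemLp w' (ENNReal.ofReal (2 * (p - 1))) μ →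
        MemLp z (ENNReal.ofReal (2 * (p - 1))) μ →
        MemLp g 2 μ →
        Integrable
            (fun x => (‖w x‖ ^ (p - 2) - ‖w' x‖ ^ (p - 2)) * ∑ i, z x i * g x i) μ ∧
          |∫ x, (‖w x‖ ^ (p - 2) - ‖w' x‖ ^ (p - 2)) * ∑ i, z x i * g x i ∂μ| ≤
            C * ((eLpNorm w (ENNReal.ofReal (2 * (p - 1))) μ).toReal +
                  (eLpNorm w' (ENNReal.ofReal (2 * (p - 1))) μ).toReal) ^ (p - 3) *
              (eLpNorm (fun x => w x - w' x) (ENNReal.ofReal (2 * (p - 1))) μ).toReal *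
              (eLpNorm z (ENNReal.ofReal (2 * (p - 1))) μ).toReal *
              (eLpNorm g 2 μ).toReal := by
  refine ⟨p - 2, by linarith, fun Ω _ μ w w' z g hw hw' hz hg => ?_⟩
  have hdot (x : Ω) : ∑ i, z x i * g x i = ⟪z x, g x⟫ := by
    simp [PiLp.inner_apply, mul_comm]
  simp only [hdot, ← Real.norm_eq_abs]
  have hmeas : AEStronglyMeasurable
      (fun x => (‖w x‖ ^ (p - 2) - ‖w' x‖ ^ (p - 2)) * ⟪z x, g x⟫) μ := by
    have := hw.1; have := hw'.1; have := hz.1; have := hg.1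
    fun_prop (disch := linarith)
  have hbound := integrable_and_norm_integral_le hmeas
    (lintegral_enorm_norm_rpow_sub_mul_inner_le hp1 hw.1 hw'.1 hz.1 hg.1)
  have := (hw.sub hw').eLpNorm_ne_top
  obtain ⟨hint, hnorm⟩ := hbound (by finiteness)
  refine ⟨hint, hnorm.trans_eq ?_⟩
  rw [ENNReal.toReal_mul, ENNReal.toReal_ofReal (by linarith), ENNReal.toReal_mul,
    ENNReal.toReal_mul, ENNReal.toReal_mul, ← ENNReal.toReal_rpow,
    ENNReal.toReal_add hw.eLpNorm_ne_top hw'.eLpNorm_ne_top]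
  ring

/-- For `d ≥ 1`, `p ∈ [3,4]` and `q := 2(p−1)`, there is `C > 0` depending only on `p`
such that for every measure `μ`, all `w, w̃, z ∈ L^q(μ; ℝ^d)` and `g ∈ L²(μ; ℝ^d)`,
`x ↦ (‖w(x)‖^(p−2) − ‖w̃(x)‖^(p−2)) (z(x)·g(x))` is integrable and
`|∫ (‖w‖^(p−2) − ‖w̃‖^(p−2))(z·g) dμ|
  ≤ C (‖w‖_{L^q} + ‖w̃‖_{L^q})^(p−3) ‖w−w̃‖_{L^q} ‖z‖_{L^q} ‖g‖_{L²}`. -/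
theorem forchheimer_difference_holder {d : ℕ} (hd : 1 ≤ d)
    (p : ℝ) (hp1 : 3 ≤ p) (hp2 : p ≤ 4) :
    ∃ C : ℝ, 0 < C ∧
      ∀ (Ω : Type u) [MeasurableSpace Ω], ∀ (μ : Measure Ω)
        (w w' z g : Ω → EuclideanSpace ℝ (Fin d)),
        MemLp w (ENNReal.ofReal (2 * (p - 1))) μ →
        MemLp w' (ENNReal.ofReal (2 * (p - 1))) μ →
        MemLp z (ENNReal.ofReal (2 * (p - 1))) μ →
        MemLp g 2 μ →
        Integrable
            (fun x => (‖w x‖ ^ (p - 2) - ‖w' x‖ ^ (p - 2)) * ∑ i, z x i * g x i) μ ∧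
          |∫ x, (‖w x‖ ^ (p - 2) - ‖w' x‖ ^ (p - 2)) * ∑ i, z x i * g x i ∂μ| ≤
            C * ((eLpNorm w (ENNReal.ofReal (2 * (p - 1))) μ).toReal +
                  (eLpNorm w' (ENNReal.ofReal (2 * (p - 1))) μ).toReal) ^ (p - 3) *
              (eLpNorm (fun x => w x - w' x) (ENNReal.ofReal (2 * (p - 1))) μ).toReal *
              (eLpNorm z (ENNReal.ofReal (2 * (p - 1))) μ).toReal *
              (eLpNorm g 2 μ).toReal :=
  forchheimer_difference_holder_general p hp1
end

section
/- Let d ≥ 1, let Ω ⊆ ℝ^d be open, let ν > 0, α > 0, F > 0 and r ∈ [3,4] be real parameters, and let f : Ω → ℝ^d. Let u : Ω → ℝ^d be twice continuously differentiable and q : Ω → ℝ be continuously differentiable, and define σ : Ω → ℝ^{d×d} by σ := ν·Du − u⊗u − q·I. Then the pair (u,q) satisfies the convective Brinkman–Forchheimer system −ν·Δu + (Du)·u + α·u + F·‖u‖^{r−2}·u + ∇q = f and div u = 0 on Ω if and only if the pair (σ,u) satisfies (1/ν)·σ^d + (1/ν)·(u⊗u)^d = Du and α·u + F·‖u‖^{r−2}·u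 − div σ = f on Ω. -/
/-!
Writing `σ = ν Du − u⊗u − qI`, the row-wise divergence is
`div σ = νΔu − (Du)u − (div u) u − ∇q`, so once `div u = 0` the two momentum equations coincide.
The deviatoric part kills multiples of `I` and is linear, so
`(1/ν)σ^d + (1/ν)(u⊗u)^d = (Du)^d = Du − (div u / d) I`, which equals `Du` exactly when `div u = 0`.
-/

/-- The partial derivative `∂_j f (x)` of a scalar field on `ℝ^d`. -/
noncomputable def pderiv' {d : ℕ} (f : EuclideanSpace ℝ (Fin d) → ℝ)
    (x : EuclideanSpace ℝ (Fin d)) (j : Fin d) : ℝ :=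
  fderiv ℝ f x (EuclideanSpace.single j 1)

/-- The Jacobian matrix `(Du)_{ij} = ∂ u_i / ∂ x_j` of a vector field on `ℝ^d`. -/
noncomputable def jac {d : ℕ} (u : EuclideanSpace ℝ (Fin d) → EuclideanSpace ℝ (Fin d))
    (x : EuclideanSpace ℝ (Fin d)) : Matrix (Fin d) (Fin d) ℝ :=
  Matrix.of fun i j => pderiv' (fun y => u y i) x j

/-- Componentwise Laplacian `(Δu)_i = ∑_j ∂²u_i/∂x_j²`. -/
noncomputable def vlap {d : ℕ} (u : EuclideanSpace ℝ (Fin d) → EuclideanSpace ℝ (Fin d))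
    (x : EuclideanSpace ℝ (Fin d)) (i : Fin d) : ℝ :=
  ∑ j, pderiv' (fun y => pderiv' (fun z => u z i) y j) x j

/-- Divergence `div u = ∑_j ∂_j u_j` of a vector field. -/
noncomputable def vdiv {d : ℕ} (u : EuclideanSpace ℝ (Fin d) → EuclideanSpace ℝ (Fin d))
    (x : EuclideanSpace ℝ (Fin d)) : ℝ :=
  ∑ j, pderiv' (fun y => u y j) x j

/-- Row-wise divergence `(div σ)_i = ∑_j ∂_j σ_{ij}` of a matrix field. -/
noncomputable def mdiv {d : ℕ}
    (σ : EuclideanSpace ℝ (Fin d) → Matrix (Fin d) (Fin d) ℝ)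
    (x : EuclideanSpace ℝ (Fin d)) (i : Fin d) : ℝ :=
  ∑ j, pderiv' (fun y => σ y i j) x j

/-- Tensor product `a ⊗ b` as a `d×d` matrix. -/
def tens {d : ℕ} (a b : EuclideanSpace ℝ (Fin d)) : Matrix (Fin d) (Fin d) ℝ :=
  Matrix.of fun i j => a i * b j

/-- Deviatoric part `M^d := M − (tr M / d)·I` of a `d×d` real matrix. -/
noncomputable def dev {d : ℕ} (M : Matrix (Fin d) (Fin d) ℝ) :
    Matrix (Fin d) (Fin d) ℝ :=
  M - (Matrix.trace M / (d : ℝ)) • (1 : Matrix (Fin d) (Fin d) ℝ)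

variable {d : ℕ}

section PartialDerivatives

variable {f g : EuclideanSpace ℝ (Fin d) → ℝ} {x : EuclideanSpace ℝ (Fin d)}

lemma pderiv'_const_mul (c : ℝ) (j : Fin d) :
    pderiv' (fun y => c * f y) x j = c * pderiv' f x j := by
  rw [pderiv', show (fun y => c * f y) = c • f from rfl, fderiv_const_smul_field]
  rfl

lemma pderiv'_mul_const (c : ℝ) (j : Fin d) :
    pderiv' (fun y => f y * c) x j = pderiv' f x j * c := by
  simp only [mul_comm _ c, pderiv'_const_mul]

lemma pderiv'_sub (hf : DifferentiableAt ℝ f x) (hg : DifferentiableAt ℝ g x) (j : Fin d) :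
    pderiv' (fun y => f y - g y) x j = pderiv' f x j - pderiv' g x j := by
  simp [pderiv', fderiv_fun_sub hf hg]

lemma pderiv'_mul (hf : DifferentiableAt ℝ f x) (hg : DifferentiableAt ℝ g x) (j : Fin d) :
    pderiv' (fun y => f y * g y) x j = pderiv' f x j * g x + f x * pderiv' g x j := by
  simp [pderiv', fderiv_fun_mul hf hg]
  ring

lemma ContDiffAt.differentiableAt_pderiv' (hf : ContDiffAt ℝ 2 f x) (j : Fin d) :
    DifferentiableAt ℝ (fun y => pderiv' f y j) x :=
  ((hf.fderiv_right le_rfl).differentiableAt one_ne_zero).clm_apply (differentiableAt_const _)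

end PartialDerivatives

section MatrixDivergence

variable {u : EuclideanSpace ℝ (Fin d) → EuclideanSpace ℝ (Fin d)}
  {x : EuclideanSpace ℝ (Fin d)}

lemma DifferentiableAt.euclidean_apply (hu : DifferentiableAt ℝ u x) (i : Fin d) :
    DifferentiableAt ℝ (fun y => u y i) x :=
  (differentiableAt_piLp 2).1 hu i

lemma differentiableAt_jac_apply (hu : ContDiffAt ℝ 2 u x) (i j : Fin d) :
    DifferentiableAt ℝ (fun y => jac u y i j) x :=
  ContDiffAt.differentiableAt_pderiv' ((contDiffAt_piLp 2).1 hu i) j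

lemma differentiableAt_tens_apply (hu : DifferentiableAt ℝ u x) (i j : Fin d) :
    DifferentiableAt ℝ (fun y => tens (u y) (u y) i j) x :=
  (hu.euclidean_apply i).mul (hu.euclidean_apply j)

lemma mdiv_sub {σ τ : EuclideanSpace ℝ (Fin d) → Matrix (Fin d) (Fin d) ℝ}
    (hσ : ∀ i j, DifferentiableAt ℝ (fun y => σ y i j) x)
    (hτ : ∀ i j, DifferentiableAt ℝ (fun y => τ y i j) x) (i : Fin d) :
    mdiv (fun y => σ y - τ y) x i = mdiv σ x i - mdiv τ x i := by
  simp only [mdiv, Matrix.sub_apply, pderiv'_sub (hσ i _) (hτ i _), Finset.sum_sub_distrib]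

lemma mdiv_smul_jac (c : ℝ) (i : Fin d) :
    mdiv (fun y => c • jac u y) x i = c * vlap u x i := by
  simp only [mdiv, vlap, jac, Matrix.smul_apply, Matrix.of_apply, smul_eq_mul, pderiv'_const_mul,
    Finset.mul_sum]

lemma mdiv_tens_self (hu : DifferentiableAt ℝ u x) (i : Fin d) :
    mdiv (fun y => tens (u y) (u y)) x i = ∑ j, jac u x i j * u x j + u x i * vdiv u x := by
  simp only [mdiv, vdiv, jac, tens, Matrix.of_apply,
    pderiv'_mul (hu.euclidean_apply i) (hu.euclidean_apply _), Finset.sum_add_distrib,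
    Finset.mul_sum]

lemma mdiv_smul_one (q : EuclideanSpace ℝ (Fin d) → ℝ) (i : Fin d) :
    mdiv (fun y => q y • (1 : Matrix (Fin d) (Fin d) ℝ)) x i = pderiv' q x i := by
  simp only [mdiv, Matrix.smul_apply, smul_eq_mul, pderiv'_mul_const]
  simp [Matrix.one_apply]

end MatrixDivergence

section Deviatoric

lemma dev_add (M N : Matrix (Fin d) (Fin d) ℝ) : dev (M + N) = dev M + dev N := by
  simp only [dev, Matrix.trace_add, add_div, add_smul]
  abel

lemma dev_sub (M N : Matrix (Fin d) (Fin d) ℝ) : dev (M - N) = dev M - dev N := by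
  simp only [dev, Matrix.trace_sub, sub_div, sub_smul]
  abel

lemma dev_smul (c : ℝ) (M : Matrix (Fin d) (Fin d) ℝ) : dev (c • M) = c • dev M := by
  simp only [dev, Matrix.trace_smul, smul_eq_mul, mul_div_assoc, smul_sub, smul_smul]

lemma dev_smul_one [NeZero d] (c : ℝ) : dev (c • (1 : Matrix (Fin d) (Fin d) ℝ)) = 0 := by
  simp [dev, Matrix.trace_smul, NeZero.ne]

lemma dev_eq_self_iff [NeZero d] {M : Matrix (Fin d) (Fin d) ℝ} : dev M = M ↔ M.trace = 0 := by
  simp [dev, NeZero.ne]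

lemma trace_jac (u : EuclideanSpace ℝ (Fin d) → EuclideanSpace ℝ (Fin d))
    (x : EuclideanSpace ℝ (Fin d)) : (jac u x).trace = vdiv u x := by
  simp [Matrix.trace, jac, vdiv]

end Deviatoric

section Pseudostress

noncomputable def pseudostress (ν : ℝ) (u : EuclideanSpace ℝ (Fin d) → EuclideanSpace ℝ (Fin d))
    (q : EuclideanSpace ℝ (Fin d) → ℝ) (x : EuclideanSpace ℝ (Fin d)) :
    Matrix (Fin d) (Fin d) ℝ :=
  ν • jac u x - tens (u x) (u x) - q x • (1 : Matrix (Fin d) (Fin d) ℝ)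

variable {ν : ℝ} {u : EuclideanSpace ℝ (Fin d) → EuclideanSpace ℝ (Fin d)}
  {q : EuclideanSpace ℝ (Fin d) → ℝ} {x : EuclideanSpace ℝ (Fin d)}

lemma mdiv_pseudostress (hu : ContDiffAt ℝ 2 u x) (hq : DifferentiableAt ℝ q x) (i : Fin d) :
    mdiv (pseudostress ν u q) x i =
      ν * vlap u x i - (∑ j, jac u x i j * u x j + u x i * vdiv u x) - pderiv' q x i := by
  have hu₁ : DifferentiableAt ℝ u x := hu.differentiableAt two_ne_zero
  unfold pseudostress
  rw [mdiv_sub, mdiv_sub, mdiv_smul_jac, mdiv_tens_self hu₁, mdiv_smul_one]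
  · exact fun i j => (differentiableAt_jac_apply hu i j).const_mul ν
  · exact differentiableAt_tens_apply hu₁
  · exact fun i j => ((differentiableAt_jac_apply hu i j).const_mul ν).sub
      (differentiableAt_tens_apply hu₁ i j)
  · exact fun i j => hq.mul_const _

lemma dev_pseudostress_add_dev_tens [NeZero d] (hν : ν ≠ 0) :
    (1 / ν) • dev (pseudostress ν u q x) + (1 / ν) • dev (tens (u x) (u x)) = dev (jac u x) := by
  rw [← smul_add, ← dev_add, pseudostress, sub_right_comm, sub_add_cancel, dev_sub, dev_smul,
    dev_smul_one, sub_zero, smul_smul, one_div_mul_cancel hν, one_smul]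

end Pseudostress

theorem CBF_formulations_equivalent_general {d : ℕ} (hd : 1 ≤ d)
    (Ω : Set (EuclideanSpace ℝ (Fin d))) (hΩ : IsOpen Ω)
    (ν α F r : ℝ) (hν : 0 < ν)
    (f : EuclideanSpace ℝ (Fin d) → EuclideanSpace ℝ (Fin d))
    (u : EuclideanSpace ℝ (Fin d) → EuclideanSpace ℝ (Fin d))
    (q : EuclideanSpace ℝ (Fin d) → ℝ)
    (hu : ContDiffOn ℝ 2 u Ω) (hq : ContDiffOn ℝ 1 q Ω)
    (σ : EuclideanSpace ℝ (Fin d) → Matrix (Fin d) (Fin d) ℝ)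
    (hσ : ∀ x, σ x = ν • jac u x - tens (u x) (u x) -
        q x • (1 : Matrix (Fin d) (Fin d) ℝ)) :
    ((∀ x ∈ Ω, (∀ i, -ν * vlap u x i + (∑ j, jac u x i j * u x j) + α * u x i +
          F * ‖u x‖ ^ (r - 2) * u x i + pderiv' q x i = f x i) ∧ vdiv u x = 0) ↔
      (∀ x ∈ Ω, ((1 / ν) • dev (σ x) + (1 / ν) • dev (tens (u x) (u x)) = jac u x) ∧
        ∀ i, α * u x i + F * ‖u x‖ ^ (r - 2) * u x i - mdiv σ x i = f x i)) := by
  obtain rfl : σ = pseudostress ν u q := funext hσ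
  have : NeZero d := ⟨by omega⟩
  refine forall₂_congr fun x hx => ?_
  have hmdiv := mdiv_pseudostress (ν := ν) (hu.contDiffAt (hΩ.mem_nhds hx))
    ((hq.contDiffAt (hΩ.mem_nhds hx)).differentiableAt one_ne_zero)
  rw [dev_pseudostress_add_dev_tens hν.ne', dev_eq_self_iff, trace_jac]
  constructor
  · rintro ⟨hmomentum, hdiv⟩
    refine ⟨hdiv, fun i => ?_⟩
    rw [hmdiv, hdiv]
    linarith [hmomentum i]
  · rintro ⟨hdiv, hmomentum⟩
    refine ⟨fun i => ?_, hdiv⟩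
    have := hmomentum i
    rw [hmdiv, hdiv] at this
    linarith

/-- Pointwise equivalence on an open set `Ω ⊆ ℝ^d` between the velocity–pressure
formulation of the stationary convective Brinkman–Forchheimer problem
`−νΔu + (Du)u + αu + F‖u‖^{r−2}u + ∇q = f`, `div u = 0`, and the
pseudostress–velocity formulation `(1/ν)σ^d + (1/ν)(u⊗u)^d = Du`,
`αu + F‖u‖^{r−2}u − div σ = f`, where `σ := νDu − u⊗u − q·I`. -/
theorem CBF_formulations_equivalent {d : ℕ} (hd : 1 ≤ d)
    (Ω : Set (EuclideanSpace ℝ (Fin d))) (hΩ : IsOpen Ω)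
    (ν α F r : ℝ) (hν : 0 < ν) (hα : 0 < α) (hF : 0 < F) (hr1 : 3 ≤ r) (hr2 : r ≤ 4)
    (f : EuclideanSpace ℝ (Fin d) → EuclideanSpace ℝ (Fin d))
    (u : EuclideanSpace ℝ (Fin d) → EuclideanSpace ℝ (Fin d))
    (q : EuclideanSpace ℝ (Fin d) → ℝ)
    (hu : ContDiffOn ℝ 2 u Ω) (hq : ContDiffOn ℝ 1 q Ω)
    (σ : EuclideanSpace ℝ (Fin d) → Matrix (Fin d) (Fin d) ℝ)
    (hσ : ∀ x, σ x = ν • jac u x - tens (u x) (u x) -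
        q x • (1 : Matrix (Fin d) (Fin d) ℝ)) :
    ((∀ x ∈ Ω, (∀ i, -ν * vlap u x i + (∑ j, jac u x i j * u x j) + α * u x i +
          F * ‖u x‖ ^ (r - 2) * u x i + pderiv' q x i = f x i) ∧ vdiv u x = 0) ↔
      (∀ x ∈ Ω, ((1 / ν) • dev (σ x) + (1 / ν) • dev (tens (u x) (u x)) = jac u x) ∧
        ∀ i, α * u x i + F * ‖u x‖ ^ (r - 2) * u x i - mdiv σ x i = f x i)) :=
  CBF_formulations_equivalent_general hd Ω hΩ ν α F r hν f u q hu hq σ hσ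
end

section
/- Let ν, α, c₁, c₂ be positive real numbers, let κ₁ ∈ (0, 2ν) and κ₂ > 0, and define α₀ := min{(1/ν)(1 − κ₁/(2ν)), 1/(2α)}, α₁ := min{α₀·c₁, 1/(2α)}, α₂ := c₂·min{κ₁/2, κ₂}, and α_A := min{α₁, α₂}. Then α_A > 0, and for all nonnegative real numbers a, m, n, g, s, v satisfying a² + m² ≥ c₁·n² and g² + s² ≥ c₂·v², there holds (1/ν)·a² + (1/α)·m² + κ₁·g² + κ₂·s² − (κ₁/ν)·a·g ≥ α_A·(n² + m² + v²). -/
/-!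
The cross term is absorbed by Young's inequality `(κ₁/ν) a g ≤ κ₁/(2ν²) a² + (κ₁/2) g²`, which
leaves `(1/ν)(1 - κ₁/(2ν)) a² + (1/α) m² + (κ₁/2) g² + κ₂ s²`. Half of the `m²` term pays for
`α_A m²`; the rest dominates `α₀ (a² + m²) ≥ α₀ c₁ n²` and `min (κ₁/2) κ₂ (g² + s²) ≥ α₂ v²`.
-/

lemma young_div_mul_mul_le {κ ν : ℝ} (hκ : 0 ≤ κ) (hν : ν ≠ 0) (a g : ℝ) :
    κ / ν * a * g ≤ κ / (2 * ν ^ 2) * a ^ 2 + κ / 2 * g ^ 2 := by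
  have h := mul_le_mul_of_nonneg_left (two_mul_le_add_sq (a / ν) g) (div_nonneg hκ zero_le_two)
  calc κ / ν * a * g = κ / 2 * (2 * (a / ν) * g) := by field_simp
    _ ≤ κ / 2 * ((a / ν) ^ 2 + g ^ 2) := h
    _ = κ / (2 * ν ^ 2) * a ^ 2 + κ / 2 * g ^ 2 := by field_simp

lemma min_mul_add_le {p q x y : ℝ} (hx : 0 ≤ x) (hy : 0 ≤ y) :
    min p q * (x + y) ≤ p * x + q * y := by
  rw [mul_add]
  gcongr
  exacts [min_le_left p q, min_le_right p q]

lemma mul_le_mul_of_le_mul_of_mul_le {β γ c x y : ℝ} (hβ : β ≤ γ * c) (hγ : 0 ≤ γ) (hx : 0 ≤ x)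
    (h : c * x ≤ y) : β * x ≤ γ * y :=
  calc β * x ≤ γ * c * x := mul_le_mul_of_nonneg_right hβ hx
    _ = γ * (c * x) := mul_assoc γ c x
    _ ≤ γ * y := mul_le_mul_of_nonneg_left h hγ

/-- Core real-variable inequality behind the ellipticity of the augmented bilinear
form: with `κ₁ ∈ (0, 2ν)`, `κ₂ > 0` and the constants `α₀, α₁, α₂, α_A` defined as
stated, `α_A > 0` and for all nonnegative `a, m, n, g, s, v` with `c₁ n² ≤ a² + m²`
and `c₂ v² ≤ g² + s²` there holds
`(1/ν)a² + (1/α)m² + κ₁g² + κ₂s² − (κ₁/ν)ag ≥ α_A (n² + m² + v²)`. -/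
theorem augmented_form_ellipticity
    (ν α c₁ c₂ κ₁ κ₂ : ℝ) (hν : 0 < ν) (hα : 0 < α)
    (hc₁ : 0 < c₁) (hc₂ : 0 < c₂)
    (hκ₁ : 0 < κ₁) (hκ₁' : κ₁ < 2 * ν) (hκ₂ : 0 < κ₂)
    (α₀ α₁ α₂ αA : ℝ)
    (hα₀ : α₀ = min ((1 / ν) * (1 - κ₁ / (2 * ν))) (1 / (2 * α)))
    (hα₁ : α₁ = min (α₀ * c₁) (1 / (2 * α)))
    (hα₂ : α₂ = c₂ * min (κ₁ / 2) κ₂)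
    (hαA : αA = min α₁ α₂) :
    0 < αA ∧
      ∀ a m n g s v : ℝ, 0 ≤ a → 0 ≤ m → 0 ≤ n → 0 ≤ g → 0 ≤ s → 0 ≤ v →
        c₁ * n ^ 2 ≤ a ^ 2 + m ^ 2 → c₂ * v ^ 2 ≤ g ^ 2 + s ^ 2 →
        αA * (n ^ 2 + m ^ 2 + v ^ 2) ≤
          (1 / ν) * a ^ 2 + (1 / α) * m ^ 2 + κ₁ * g ^ 2 + κ₂ * s ^ 2 -
            (κ₁ / ν) * a * g := by
  have hκ₁ν : 0 < 1 - κ₁ / (2 * ν) := sub_pos.2 ((div_lt_one (by positivity)).2 hκ₁')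
  have hα₀_pos : 0 < α₀ := hα₀ ▸ lt_min (by positivity) (by positivity)
  have hA₁ : αA ≤ α₁ := hαA ▸ min_le_left α₁ α₂
  have hA₂ : αA ≤ α₂ := hαA ▸ min_le_right α₁ α₂
  have hμ_pos : 0 < min (κ₁ / 2) κ₂ := lt_min (by positivity) hκ₂
  refine ⟨hαA ▸ lt_min (hα₁ ▸ lt_min (by positivity) (by positivity)) (hα₂ ▸ mul_pos hc₂ hμ_pos),
    ?_⟩
  intro a m n g s v _ _ _ _ _ _ hn hv
  have hn' : αA * n ^ 2 ≤ α₀ * (a ^ 2 + m ^ 2) := mul_le_mul_of_le_mul_of_mul_le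
    (hA₁.trans (hα₁ ▸ min_le_left _ _)) hα₀_pos.le (sq_nonneg n) hn
  have hm' : αA * m ^ 2 ≤ 1 / (2 * α) * m ^ 2 :=
    mul_le_mul_of_nonneg_right (hA₁.trans (hα₁ ▸ min_le_right _ _)) (sq_nonneg m)
  have hv' : αA * v ^ 2 ≤ min (κ₁ / 2) κ₂ * (g ^ 2 + s ^ 2) := mul_le_mul_of_le_mul_of_mul_le
    (hA₂.trans_eq (hα₂.trans (mul_comm _ _))) hμ_pos.le (sq_nonneg v) hv
  have ham : α₀ * (a ^ 2 + m ^ 2) ≤ 1 / ν * (1 - κ₁ / (2 * ν)) * a ^ 2 + 1 / (2 * α) * m ^ 2 :=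
    hα₀ ▸ min_mul_add_le (sq_nonneg a) (sq_nonneg m)
  have hgs := min_mul_add_le (p := κ₁ / 2) (q := κ₂) (sq_nonneg g) (sq_nonneg s)
  have hyoung := young_div_mul_mul_le hκ₁.le hν.ne' a g
  have hsplit : 1 / ν * (1 - κ₁ / (2 * ν)) * a ^ 2 = 1 / ν * a ^ 2 - κ₁ / (2 * ν ^ 2) * a ^ 2 := by
    field_simp
  have hhalf : 1 / α * m ^ 2 = 2 * (1 / (2 * α) * m ^ 2) := by field_simp
  linarith
end
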